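/- arXiv:1801.09512 — 2 statements merged into one kernel-verified Lean document; each statement's English description precedes it below -/
import Mathlib

section
/- The Mellin transform of the modified Bessel function K₀ is given by (ℳK₀)(s) = ∫₀^∞ y^{s−1} K₀(y) dy = 2^{s−2} Γ(s/2)² for all real (or complex) s with Re s > 0. -/
open Real Set MeasureTheory

/-- Modified Bessel function K₀ via its integral representation. -/
noncomputable def K0 (x : ℝ) : ℝ := ∫ t in Set.Ioi (0:ℝ), Real.exp (-x * Real.cosh t)

/-- Mellin transform of a real function. -/
noncomputable def mellinT (F : ℝ → ℝ) (s : ℂ) : ℂ :=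
  ∫ y in Set.Ioi (0:ℝ), (y:ℂ)^(s-1) * (F y : ℂ)

/-!
Inserting the integral representation of `K₀` and exchanging the order of integration, the inner
integral in `y` is a rescaled Gamma integral, so `ℳK₀(s) = Γ(s) ∫₀^∞ cosh(t)^{-s} dt`; Fubini is
justified by `cosh t ≥ eᵗ / 2`. The substitution `v = tanh² t` turns the remaining integral into
`B(1/2, s/2) / 2`, and Legendre's duplication formula collapses `Γ(s) B(1/2, s/2)` to
`2^{s-1} Γ(s/2)²`.
-/

namespace Real

theorem hasDerivAt_tanh (x : ℝ) : HasDerivAt tanh (1 / cosh x ^ 2) x := by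
  have h := (hasDerivAt_sinh x).div (hasDerivAt_cosh x) (cosh_pos x).ne'
  rw [show cosh x * cosh x - sinh x * sinh x = 1 by nlinarith [cosh_sq_sub_sinh_sq x]] at h
  rwa [show sinh / cosh = tanh from funext fun y => (tanh_eq_sinh_div_cosh y).symm] at h

theorem tanh_pos {x : ℝ} (hx : 0 < x) : 0 < tanh x := by
  rw [tanh_eq_sinh_div_cosh]
  exact div_pos (sinh_pos_iff.mpr hx) (cosh_pos x)

theorem one_sub_tanh_sq (x : ℝ) : 1 - tanh x ^ 2 = (cosh x ^ 2)⁻¹ := by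
  have := cosh_pos x
  rw [tanh_eq_sinh_div_cosh, div_pow, cosh_sq]
  field_simp
  ring

theorem one_div_cosh_le_two_mul_exp_neg (x : ℝ) : 1 / cosh x ≤ 2 * exp (-x) := by
  have h : exp x / 2 ≤ cosh x := by
    rw [cosh_eq]
    linarith [(exp_pos (-x)).le]
  calc 1 / cosh x ≤ 1 / (exp x / 2) := one_div_le_one_div_of_le (by positivity) h
    _ = 2 * exp (-x) := by rw [exp_neg]; field_simp

theorem integrableOn_one_div_cosh_rpow {σ : ℝ} (hσ : 0 < σ) :
    IntegrableOn (fun t => (1 / cosh t) ^ σ) (Ioi 0) := by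
  refine Integrable.mono' ((exp_neg_integrableOn_Ioi 0 hσ).const_mul (2 ^ σ)) ?_ ?_
  · exact ((continuous_const.div continuous_cosh fun t => (cosh_pos t).ne').rpow_const
      fun _ => Or.inr hσ.le).aestronglyMeasurable
  · refine ae_of_all _ fun t => ?_
    rw [norm_of_nonneg (by positivity), show -σ * t = -t * σ by ring, exp_mul,
      ← mul_rpow zero_le_two (exp_pos _).le]
    exact rpow_le_rpow (by positivity) (one_div_cosh_le_two_mul_exp_neg t) hσ.le

theorem image_tanh_sq_Ioi : (fun t => tanh t ^ 2) '' Ioi 0 = Ioo 0 1 := by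
  ext v
  constructor
  · rintro ⟨t, ht, rfl⟩
    exact ⟨pow_pos (tanh_pos ht) 2, tanh_sq_lt_one t⟩
  · rintro ⟨hv0, hv1⟩
    have hsqrt : √v ∈ Ioo 0 1 := ⟨sqrt_pos.mpr hv0, (sqrt_lt' one_pos).mpr (by simpa)⟩
    refine ⟨artanh √v, artanh_pos hsqrt, ?_⟩
    show tanh _ ^ 2 = v
    rw [tanh_artanh ⟨by linarith [hsqrt.1], hsqrt.2⟩, sq_sqrt hv0.le]

theorem injOn_tanh_sq_Ioi : InjOn (fun t => tanh t ^ 2) (Ioi 0) := fun _ ha _ hb hab =>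
  tanh_injective ((pow_left_inj₀ (tanh_pos ha).le (tanh_pos hb).le two_ne_zero).mp hab)

end Real

namespace Complex

theorem ofReal_sq_cpow {x : ℝ} (hx : 0 ≤ x) (w : ℂ) :
    ((x ^ 2 : ℝ) : ℂ) ^ w = (x : ℂ) ^ (2 * w) := by
  rw [← Real.rpow_two, ← cpow_mul_ofReal_nonneg hx]
  norm_num

theorem mellinConvergent_exp_neg_mul {r : ℝ} (hr : 0 < r) {s : ℂ} (hs : 0 < s.re) :
    MellinConvergent (fun y : ℝ => ((Real.exp (-(r * y)) : ℝ) : ℂ)) s :=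
  (MellinConvergent.comp_mul_left (f := fun y : ℝ => ((Real.exp (-y) : ℝ) : ℂ)) hr).mpr <| by
    simpa only [MellinConvergent, smul_eq_mul, mul_comm] using GammaIntegral_convergent hs

theorem mellin_exp_neg_mul {r : ℝ} (hr : 0 < r) {s : ℂ} (hs : 0 < s.re) :
    mellin (fun y : ℝ => ((Real.exp (-(r * y)) : ℝ) : ℂ)) s = (r : ℂ) ^ (-s) * Gamma s := by
  rw [mellin_comp_mul_left (fun y : ℝ => ((Real.exp (-y) : ℝ) : ℂ)) s hr,
    ← GammaIntegral_eq_mellin, ← Gamma_eq_integral hs, smul_eq_mul]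

theorem Gamma_mul_betaIntegral_one_half {s : ℂ} (hs : 0 < s.re) :
    Gamma s * betaIntegral (1/2) (s/2) = 2 ^ (s - 1) * Gamma (s/2) ^ 2 := by
  have hs2 : 0 < (s/2).re := by simpa using hs
  have hΓhalf : Gamma (1/2) = (√π : ℂ) := by
    rw [show (1/2 : ℂ) = ((1/2 : ℝ) : ℂ) by push_cast; rfl, Gamma_ofReal, Real.Gamma_one_half_eq]
  have hbeta := Gamma_mul_Gamma_eq_betaIntegral (by norm_num : 0 < (1/2 : ℂ).re) hs2
  have hdup := Gamma_mul_Gamma_add_half (s/2)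
  rw [hΓhalf] at hbeta
  rw [mul_div_cancel₀ s two_ne_zero, add_comm (s/2)] at hdup
  have hpi : (√π : ℂ) ≠ 0 := by exact_mod_cast (Real.sqrt_pos.mpr Real.pi_pos).ne'
  have h2 : (2 : ℂ) ^ (s - 1) * 2 ^ (1 - s) = 1 := by
    rw [← cpow_add _ _ two_ne_zero, sub_add_sub_cancel', sub_self, cpow_zero]
  refine mul_left_cancel₀ hpi ?_
  linear_combination (-2 ^ (s - 1) * betaIntegral (1/2) (s/2)) * hdup
    - 2 ^ (s - 1) * Gamma (s/2) * hbeta - Gamma s * √π * betaIntegral (1/2) (s/2) * h2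

end Complex

theorem betaIntegral_one_half_eq_two_mul_integral_cosh_cpow (s : ℂ) :
    Complex.betaIntegral (1/2) (s/2) = 2 * ∫ t in Ioi (0:ℝ), ((cosh t : ℝ) : ℂ) ^ (-s) := by
  have hderiv t : HasDerivAt (fun t => tanh t ^ 2) (2 * tanh t * (1 / cosh t ^ 2)) t := by
    simpa using (hasDerivAt_tanh t).fun_pow 2
  rw [Complex.betaIntegral, intervalIntegral.integral_of_le zero_le_one,
    integral_Ioc_eq_integral_Ioo, ← image_tanh_sq_Ioi,
    integral_image_eq_integral_abs_deriv_smul measurableSet_Ioi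
      (fun t _ => (hderiv t).hasDerivWithinAt) injOn_tanh_sq_Ioi, ← integral_const_mul]
  refine setIntegral_congr_fun measurableSet_Ioi fun t ht => ?_
  have hτ := tanh_pos ht
  have hc := cosh_pos t
  have hsech : (1:ℂ) - ((tanh t ^ 2 : ℝ) : ℂ) = (((cosh t ^ 2)⁻¹ : ℝ) : ℂ) := by
    rw [← one_sub_tanh_sq]
    push_cast
    ring
  set τ := tanh t
  set c := cosh t
  have hc' : (c : ℂ) ≠ 0 := by exact_mod_cast hc.ne'
  rw [hsech, Complex.ofReal_inv, Complex.inv_cpow_ofReal_nonneg (by positivity),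
    Complex.ofReal_sq_cpow hτ.le, Complex.ofReal_sq_cpow hc.le,
    show 2 * (1/2 - 1 : ℂ) = -1 by ring, show 2 * (s/2 - 1) = s - 2 by ring,
    Complex.cpow_neg_one, Complex.cpow_sub _ _ hc', Complex.cpow_two, Complex.cpow_neg,
    abs_of_pos (by positivity), Complex.real_smul]
  have hτ' : (τ : ℂ) ≠ 0 := by exact_mod_cast hτ.ne'
  have hcs : (c : ℂ) ^ s ≠ 0 := by simp [Complex.cpow_eq_zero_iff, hc']
  push_cast
  field_simp

theorem integrable_cpow_mul_exp_neg_cosh_mul {s : ℂ} (hs : 0 < s.re) :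
    Integrable
      (Function.uncurry fun y t : ℝ => (y : ℂ) ^ (s - 1) * ((exp (-(cosh t * y)) : ℝ) : ℂ))
      ((volume.restrict (Ioi 0)).prod (volume.restrict (Ioi 0))) := by
  have hmeas : AEStronglyMeasurable
      (Function.uncurry fun y t : ℝ => (y : ℂ) ^ (s - 1) * ((exp (-(cosh t * y)) : ℝ) : ℂ))
      ((volume.restrict (Ioi 0)).prod (volume.restrict (Ioi 0))) := by
    rw [Measure.prod_restrict]
    refine ContinuousOn.aestronglyMeasurable ?_ (measurableSet_Ioi.prod measurableSet_Ioi)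
    refine ContinuousOn.mul (fun p hp => ?_) (Continuous.continuousOn (by fun_prop))
    exact ((Complex.continuous_ofReal.comp continuous_fst).continuousAt.cpow continuousAt_const
      (Complex.ofReal_mem_slitPlane.2 hp.1)).continuousWithinAt
  rw [integrable_prod_iff' hmeas]
  refine ⟨ae_of_all _ fun t => Complex.mellinConvergent_exp_neg_mul (cosh_pos t) hs, ?_⟩
  have hnorm (t : ℝ) : ∫ y in Ioi (0:ℝ), ‖(y : ℂ) ^ (s - 1) * ((exp (-(cosh t * y)) : ℝ) : ℂ)‖ =
      (1 / cosh t) ^ s.re * Gamma s.re := by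
    rw [← integral_rpow_mul_exp_neg_mul_Ioi hs (cosh_pos t)]
    refine setIntegral_congr_fun measurableSet_Ioi fun y hy => ?_
    rw [norm_mul, Complex.norm_cpow_eq_rpow_re_of_pos hy, Complex.norm_real,
      norm_of_nonneg (exp_pos _).le, Complex.sub_re, Complex.one_re]
  simpa only [Function.uncurry_apply_pair, hnorm] using
    (integrableOn_one_div_cosh_rpow hs).mul_const (Gamma s.re)

/-- The Mellin transform of K₀: (ℳK₀)(s) = 2^{s−2} Γ(s/2)² for Re s > 0. -/
theorem mellin_K0 (s : ℂ) (hs : 0 < s.re) :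
    mellinT K0 s = (2:ℂ)^(s-2) * (Complex.Gamma (s/2))^2 := by
  have hK0 : mellinT K0 s = ∫ y in Ioi (0:ℝ), ∫ t in Ioi (0:ℝ),
      (y : ℂ) ^ (s - 1) * ((exp (-(cosh t * y)) : ℝ) : ℂ) := by
    refine setIntegral_congr_fun measurableSet_Ioi fun y _ => ?_
    rw [K0, ← integral_complex_ofReal, ← integral_const_mul]
    simp only [neg_mul, mul_comm y]
  have h2 : (2 : ℂ) ^ (s - 1) = 2 ^ (s - 2) * 2 := by
    rw [show s - 1 = s - 2 + 1 by ring, Complex.cpow_add _ _ two_ne_zero, Complex.cpow_one]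
  calc mellinT K0 s
      = ∫ t in Ioi (0:ℝ), mellin (fun y : ℝ => ((exp (-(cosh t * y)) : ℝ) : ℂ)) s := by
        rw [hK0, integral_integral_swap (integrable_cpow_mul_exp_neg_cosh_mul hs)]
        rfl
    _ = ∫ t in Ioi (0:ℝ), ((cosh t : ℝ) : ℂ) ^ (-s) * Complex.Gamma s :=
        setIntegral_congr_fun measurableSet_Ioi fun t _ =>
          Complex.mellin_exp_neg_mul (cosh_pos t) hs
    _ = Complex.Gamma s * Complex.betaIntegral (1/2) (s/2) / 2 := by
        rw [integral_mul_const, betaIntegral_one_half_eq_two_mul_integral_cosh_cpow]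
        ring
    _ = (2:ℂ)^(s-2) * (Complex.Gamma (s/2))^2 := by
        rw [Complex.Gamma_mul_betaIntegral_one_half hs, h2]
        ring
end

section
/- If f : ℝ² → ℝ is continuous, compactly supported, and vanishes at all points x(ξ, η) with η ≥ η₀ (i.e., f is supported inside the parabola 𝒫_{η₀}), then for any k > 0 and ξ ∈ ℝ, ∫₀^∞ (ℛf)(x(ξ, η₀), r) K₀(kr) dr = ∫₀^{η₀} ∫_{−∞}^{∞} f*(ξ', η') K₀(k · ρ(ξ, η₀, ξ', η')) dξ' dη', where f*(ξ', η') = (ξ'² + η'²) f(x(ξ', η')). -/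
/-! Both sides equal `∫ f(y) K₀(k |y - x(ξ, η₀)|) dy` over the plane. For the left side
this is the integral in polar coordinates centred at `x(ξ, η₀)`, read through Fubini; it
converges because `f` is bounded with compact support and `K₀(s) ≤ √(2π/s)` makes
`r K₀(kr) = O(√r)`. For the right side it is the change of variables `(η, ξ) ↦ x(ξ, η)`,
injective on `η > 0` with Jacobian `ξ² + η²`, whose image of `(0, ∞) × ℝ` is the plane minus
a half-line; `f` vanishes on the image of `η ≥ η₀`, so only `(0, η₀) × ℝ` contributes. -/

open Real Set MeasureTheory

/-- Parabolic coordinates in the plane. -/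
noncomputable def pcoord (ξ η : ℝ) : ℝ × ℝ := ((ξ^2 - η^2)/2, ξ*η)

/-- Euclidean distance on ℝ². -/
noncomputable def edist2 (a b : ℝ × ℝ) : ℝ := Real.sqrt ((a.1-b.1)^2 + (a.2-b.2)^2)

/-- Spherical mean transform in the plane. -/
noncomputable def sphMean (f : ℝ × ℝ → ℝ) (x : ℝ × ℝ) (r : ℝ) : ℝ :=
  ∫ θ in (-Real.pi)..Real.pi, f (x.1 + r * Real.cos θ, x.2 + r * Real.sin θ) * r

lemma one_add_sq_div_two_le_cosh (t : ℝ) : 1 + t ^ 2 / 2 ≤ cosh t := by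
  have h := sum_le_hasSum (Finset.range 2)
    (fun n _ => div_nonneg ((even_two_mul n).pow_nonneg t) (by positivity)) (hasSum_cosh t)
  norm_num [Finset.sum_range_succ] at h
  linarith

lemma exp_neg_mul_cosh_le {x : ℝ} (hx : 0 ≤ x) (t : ℝ) :
    exp (-x * cosh t) ≤ exp (-(x / 2) * t ^ 2) := by
  refine exp_le_exp.2 ?_
  nlinarith [one_add_sq_div_two_le_cosh t]

lemma integrable_exp_neg_mul_cosh {x : ℝ} (hx : 0 < x) :
    Integrable fun t : ℝ => exp (-x * cosh t) :=
  (integrable_exp_neg_mul_sq (half_pos hx)).mono'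
    (Continuous.aestronglyMeasurable (by fun_prop)) (.of_forall fun t => by
      rw [norm_of_nonneg (exp_pos _).le]; exact exp_neg_mul_cosh_le hx.le t)

lemma K0_nonneg (x : ℝ) : 0 ≤ K0 x :=
  integral_nonneg fun _ => (exp_pos _).le

lemma measurable_K0 : Measurable K0 :=
  (StronglyMeasurable.integral_prod_right (f := fun x t : ℝ => exp (-x * cosh t))
    (by fun_prop : Continuous fun p : ℝ × ℝ => exp (-p.1 * cosh p.2)).stronglyMeasurable
    ).measurable

lemma K0_le {x : ℝ} (hx : 0 < x) : K0 x ≤ √(π / (x / 2)) :=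
  calc K0 x ≤ ∫ t, exp (-x * cosh t) :=
        setIntegral_le_integral (integrable_exp_neg_mul_cosh hx)
          (.of_forall fun _ => (exp_pos _).le)
    _ ≤ ∫ t, exp (-(x / 2) * t ^ 2) :=
        integral_mono (integrable_exp_neg_mul_cosh hx) (integrable_exp_neg_mul_sq (half_pos hx))
          (exp_neg_mul_cosh_le hx.le)
    _ = √(π / (x / 2)) := integral_gaussian _

lemma mul_K0_mul_le {k r : ℝ} (hk : 0 < k) (hr : 0 < r) :
    r * K0 (k * r) ≤ √(2 * π * r / k) :=
  calc r * K0 (k * r) ≤ √(r ^ 2) * √(π / (k * r / 2)) := by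
        rw [sqrt_sq hr.le]; gcongr; exact K0_le (by positivity)
    _ = √(2 * π * r / k) := by
        rw [← sqrt_mul (by positivity)]; congr 1; field_simp

lemma integrable_iff_integrableOn_polarCoord_target {E : Type*} [NormedAddCommGroup E]
    [NormedSpace ℝ E] (g : ℝ × ℝ → E) :
    Integrable g ↔ IntegrableOn (fun p => p.1 • g (polarCoord.symm p)) polarCoord.target := by
  have hinj : InjOn polarCoord.symm polarCoord.target := polarCoord.symm.injOn
  rw [← integrableOn_univ, ← integrableOn_congr_set_ae polarCoord_source_ae_eq_univ,
    ← polarCoord.symm_image_target_eq_source,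
    integrableOn_image_iff_integrableOn_abs_det_fderiv_smul volume
      polarCoord.open_target.measurableSet
      (fun p _ => (hasFDerivAt_polarCoord_symm p).hasFDerivWithinAt) hinj]
  refine integrableOn_congr_fun (fun p hp => ?_) polarCoord.open_target.measurableSet
  rw [det_fderivPolarCoordSymm, abs_of_pos hp.1]

lemma sphMean_eq_setIntegral (F : ℝ × ℝ → ℝ) (x : ℝ × ℝ) (r : ℝ) :
    sphMean F x r = ∫ θ in Ioo (-π) π, F (x + polarCoord.symm (r, θ)) * r := by
  rw [sphMean, intervalIntegral.integral_of_le (by linarith [pi_pos]),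
    integral_Ioc_eq_integral_Ioo]
  rfl

lemma edist2_add_polarCoord_symm (x : ℝ × ℝ) {p : ℝ × ℝ} (hp : 0 ≤ p.1) :
    edist2 x (x + polarCoord.symm p) = p.1 := by
  have hsq : (p.1 * cos p.2) ^ 2 + (p.1 * sin p.2) ^ 2 = p.1 ^ 2 := by
    linear_combination p.1 ^ 2 * cos_sq_add_sin_sq p.2
  simp only [edist2, polarCoord_symm_apply, Prod.fst_add, Prod.snd_add, sub_add_cancel_left,
    neg_sq, hsq, sqrt_sq hp]

section PolarCoordinates

variable {F : ℝ × ℝ → ℝ} {x : ℝ × ℝ} {φ : ℝ → ℝ}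

lemma mul_fst_mul_eq_smul_edist2 {p : ℝ × ℝ} (hp : p ∈ polarCoord.target) :
    F (x + polarCoord.symm p) * p.1 * φ p.1 =
      p.1 • (F (x + polarCoord.symm p) * φ (edist2 x (x + polarCoord.symm p))) := by
  rw [edist2_add_polarCoord_symm x hp.1.le, smul_eq_mul]
  ring

lemma integrable_mul_comp_edist2
    (h : IntegrableOn (fun p => F (x + polarCoord.symm p) * p.1 * φ p.1) polarCoord.target) :
    Integrable fun y => F y * φ (edist2 x y) := by
  have h' := (integrable_iff_integrableOn_polarCoord_target
    fun v => F (x + v) * φ (edist2 x (x + v))).2 <|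
      h.congr_fun (fun p hp => mul_fst_mul_eq_smul_edist2 hp) polarCoord.open_target.measurableSet
  simpa using h'.comp_sub_right x

lemma integral_sphMean_mul
    (h : IntegrableOn (fun p => F (x + polarCoord.symm p) * p.1 * φ p.1) polarCoord.target) :
    ∫ r in Ioi 0, sphMean F x r * φ r = ∫ y, F y * φ (edist2 x y) := by
  rw [polarCoord_target] at h
  calc ∫ r in Ioi 0, sphMean F x r * φ r
      = ∫ r in Ioi 0, ∫ θ in Ioo (-π) π, F (x + polarCoord.symm (r, θ)) * r * φ r := by
        simp_rw [sphMean_eq_setIntegral, integral_mul_const]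
    _ = ∫ p in polarCoord.target, F (x + polarCoord.symm p) * p.1 * φ p.1 := by
        rw [polarCoord_target]
        exact (setIntegral_prod _ h).symm
    _ = ∫ p in polarCoord.target,
          p.1 • (F (x + polarCoord.symm p) * φ (edist2 x (x + polarCoord.symm p))) :=
        setIntegral_congr_fun polarCoord.open_target.measurableSet
          fun p hp => mul_fst_mul_eq_smul_edist2 hp
    _ = ∫ y, F y * φ (edist2 x y) := by
        rw [integral_comp_polarCoord_symm fun v => F (x + v) * φ (edist2 x (x + v))]
        exact integral_add_left_eq_self (fun y => F y * φ (edist2 x y)) x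

end PolarCoordinates

lemma integrableOn_polarCoord_target_mul_K0 {f : ℝ × ℝ → ℝ} (hf : Continuous f)
    (hsupp : HasCompactSupport f) {k : ℝ} (hk : 0 < k) (x : ℝ × ℝ) :
    IntegrableOn (fun p => f (x + polarCoord.symm p) * p.1 * K0 (k * p.1))
      polarCoord.target := by
  obtain ⟨C, hC⟩ := hf.bounded_above_of_compact_support hsupp
  obtain ⟨R, hR⟩ := hsupp.isCompact.exists_bound_of_continuousOn (f := edist2 x)
    (by unfold edist2; fun_prop)
  have hbox : MeasurableSet (Ioc 0 R ×ˢ Ioo (-π) π) := measurableSet_Ioc.prod measurableSet_Ioo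
  have hfinite : volume (Ioc 0 R ×ˢ Ioo (-π) π) ≠ ⊤ := by
    rw [Measure.volume_eq_prod, Measure.prod_prod]
    exact ENNReal.mul_ne_top measure_Ioc_lt_top.ne measure_Ioo_lt_top.ne
  have hmeas : Measurable fun p : ℝ × ℝ => f (x + polarCoord.symm p) * p.1 * K0 (k * p.1) :=
    ((hf.comp (continuous_const.add continuous_polarCoord_symm)).measurable.mul
      measurable_fst).mul (measurable_K0.comp (measurable_fst.const_mul k))
  have hbound : ∀ p ∈ Ioc 0 R ×ˢ Ioo (-π) π,
      ‖f (x + polarCoord.symm p) * p.1 * K0 (k * p.1)‖ ≤ C * √(2 * π * R / k) := by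
    rintro p ⟨⟨hr, hrR⟩, -⟩
    rw [mul_assoc, norm_mul, norm_of_nonneg (mul_nonneg hr.le (K0_nonneg _))]
    exact mul_le_mul (hC _) ((mul_K0_mul_le hk hr).trans (by gcongr))
      (mul_nonneg hr.le (K0_nonneg _)) ((norm_nonneg _).trans (hC 0))
  have hvanish : ∀ p ∈ polarCoord.target \ Ioc 0 R ×ˢ Ioo (-π) π,
      f (x + polarCoord.symm p) * p.1 * K0 (k * p.1) = 0 := by
    rintro p ⟨⟨hr, hθ⟩, hp⟩
    by_contra hne
    have hmem : x + polarCoord.symm p ∈ tsupport f :=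
      subset_tsupport f (left_ne_zero_of_mul (left_ne_zero_of_mul hne))
    have hrR := (le_abs_self _).trans (hR _ hmem)
    rw [edist2_add_polarCoord_symm x (le_of_lt hr)] at hrR
    exact hp ⟨⟨hr, hrR⟩, hθ⟩
  exact (Measure.integrableOn_of_bounded hfinite hmeas.aestronglyMeasurable
    (ae_restrict_of_forall_mem hbox hbound)).of_forall_sdiff_eq_zero
      polarCoord.open_target.measurableSet hvanish

noncomputable def pcoordSwap (p : ℝ × ℝ) : ℝ × ℝ := pcoord p.2 p.1

noncomputable def fderivPcoordSwap (p : ℝ × ℝ) : ℝ × ℝ →L[ℝ] ℝ × ℝ :=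
  (Matrix.toLin (.finTwoProd ℝ) (.finTwoProd ℝ) !![-p.1, p.2; p.2, p.1]).toContinuousLinearMap

lemma hasFDerivAt_pcoordSwap (p : ℝ × ℝ) :
    HasFDerivAt pcoordSwap (fderivPcoordSwap p) p := by
  unfold fderivPcoordSwap pcoordSwap pcoord
  rw [Matrix.toLin_finTwoProd_toContinuousLinearMap]
  have hfst := hasFDerivAt_fst (𝕜 := ℝ) (E := ℝ) (F := ℝ) (p := p)
  have hsnd := hasFDerivAt_snd (𝕜 := ℝ) (E := ℝ) (F := ℝ) (p := p)
  convert! (((hsnd.mul hsnd).sub (hfst.mul hfst)).mul_const (1 / 2)).prodMk (hsnd.mul hfst)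
    using 1 <;> ext <;> simp <;> ring

lemma abs_det_fderivPcoordSwap (p : ℝ × ℝ) :
    |(fderivPcoordSwap p).det| = p.2 ^ 2 + p.1 ^ 2 := by
  rw [fderivPcoordSwap, LinearMap.det_toContinuousLinearMap, LinearMap.det_toLin,
    Matrix.det_fin_two_of, abs_of_nonpos (by nlinarith [sq_nonneg p.1, sq_nonneg p.2])]
  ring

lemma injOn_pcoordSwap : InjOn pcoordSwap (Ioi 0 ×ˢ univ) := by
  rintro ⟨η, ξ⟩ ⟨hη, -⟩ ⟨η', ξ'⟩ ⟨hη', -⟩ h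
  simp only [pcoordSwap, pcoord, Prod.mk.injEq] at h hη hη' ⊢
  obtain ⟨h1, h2⟩ := h
  have hsq : (ξ ^ 2 + η ^ 2) ^ 2 = (ξ' ^ 2 + η' ^ 2) ^ 2 := by
    linear_combination
      2 * (ξ ^ 2 - η ^ 2 + (ξ' ^ 2 - η' ^ 2)) * h1 + 4 * (ξ * η + ξ' * η') * h2
  have hsum : ξ ^ 2 + η ^ 2 = ξ' ^ 2 + η' ^ 2 :=
    (pow_left_inj₀ (by positivity) (by positivity) two_ne_zero).1 hsq
  have hηη' : η = η' := (pow_left_inj₀ hη.le hη'.le two_ne_zero).1 (by linarith)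
  subst hηη'
  exact ⟨rfl, mul_right_cancel₀ hη.ne' h2⟩

lemma exists_pcoordSwap_eq {y : ℝ × ℝ} (hy : y.2 ≠ 0) :
    ∃ p, 0 < p.1 ∧ pcoordSwap p = y := by
  set s := √(y.1 ^ 2 + y.2 ^ 2)
  have hs2 : s ^ 2 = y.1 ^ 2 + y.2 ^ 2 := sq_sqrt (by positivity)
  have hy1 : y.1 < s := by nlinarith [sqrt_nonneg (y.1 ^ 2 + y.2 ^ 2), sq_pos_of_ne_zero hy]
  set η := √(s - y.1)
  have hη2 : η ^ 2 = s - y.1 := sq_sqrt (by linarith)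
  have hη : 0 < η := sqrt_pos.2 (by linarith)
  have hξ2 : (y.2 / η) ^ 2 = s + y.1 := by
    rw [div_pow, hη2, div_eq_iff (by linarith)]
    linear_combination -hs2
  refine ⟨(η, y.2 / η), hη, Prod.ext ?_ ?_⟩
  · simp only [pcoordSwap, pcoord, hξ2, hη2]
    ring
  · exact div_mul_cancel₀ _ hη.ne'

lemma ae_snd_ne_zero : ∀ᵐ y : ℝ × ℝ, y.2 ≠ 0 := by
  have : {y : ℝ × ℝ | y.2 = 0} = univ ×ˢ {0} := by ext; simp
  rw [ae_iff]
  simp only [ne_eq, not_not, this, Measure.volume_eq_prod, Measure.prod_prod,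
    Real.volume_singleton, mul_zero]

section ParabolicCoordinates

variable {E : Type*} [NormedAddCommGroup E] [NormedSpace ℝ E] {s : Set (ℝ × ℝ)}

lemma setIntegral_image_pcoordSwap (hs : MeasurableSet s) (hs' : s ⊆ Ioi 0 ×ˢ univ)
    (g : ℝ × ℝ → E) :
    ∫ y in pcoordSwap '' s, g y = ∫ p in s, (p.2 ^ 2 + p.1 ^ 2) • g (pcoordSwap p) := by
  simp_rw [integral_image_eq_integral_abs_det_fderiv_smul volume hs
    (fun p _ => (hasFDerivAt_pcoordSwap p).hasFDerivWithinAt) (injOn_pcoordSwap.mono hs'),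
    abs_det_fderivPcoordSwap]

lemma integrableOn_image_pcoordSwap_iff (hs : MeasurableSet s) (hs' : s ⊆ Ioi 0 ×ˢ univ)
    (g : ℝ × ℝ → E) :
    IntegrableOn g (pcoordSwap '' s) ↔
      IntegrableOn (fun p => (p.2 ^ 2 + p.1 ^ 2) • g (pcoordSwap p)) s := by
  simp_rw [integrableOn_image_iff_integrableOn_abs_det_fderiv_smul volume hs
    (fun p _ => (hasFDerivAt_pcoordSwap p).hasFDerivWithinAt) (injOn_pcoordSwap.mono hs'),
    abs_det_fderivPcoordSwap]

end ParabolicCoordinates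

lemma intervalIntegral_integral_mul_comp_pcoord {η₀ : ℝ} (hη₀ : 0 ≤ η₀) {g : ℝ × ℝ → ℝ}
    (hg : Integrable g) (hvan : ∀ ξ η, η₀ ≤ η → g (pcoord ξ η) = 0) :
    ∫ η in 0..η₀, ∫ ξ, (ξ ^ 2 + η ^ 2) * g (pcoord ξ η) = ∫ y, g y := by
  have hs : MeasurableSet (Ioo 0 η₀ ×ˢ (univ : Set ℝ)) := measurableSet_Ioo.prod .univ
  have hs' : Ioo 0 η₀ ×ˢ (univ : Set ℝ) ⊆ Ioi 0 ×ˢ univ := prod_mono Ioo_subset_Ioi_self le_rfl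
  have hint := (integrableOn_image_pcoordSwap_iff hs hs' g).1 hg.integrableOn
  have hcover : ∀ᵐ y, y ∉ pcoordSwap '' (Ioo 0 η₀ ×ˢ univ) → g y = 0 := by
    filter_upwards [ae_snd_ne_zero] with y hy hy_notin
    obtain ⟨p, hp, rfl⟩ := exists_pcoordSwap_eq hy
    exact hvan _ _ (not_lt.1 fun h => hy_notin ⟨p, ⟨⟨hp, h⟩, trivial⟩, rfl⟩)
  calc ∫ η in 0..η₀, ∫ ξ, (ξ ^ 2 + η ^ 2) * g (pcoord ξ η)
      = ∫ η in Ioo 0 η₀, ∫ ξ in univ, (ξ ^ 2 + η ^ 2) • g (pcoordSwap (η, ξ)) := by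
        rw [intervalIntegral.integral_of_le hη₀, integral_Ioc_eq_integral_Ioo]
        simp_rw [setIntegral_univ]
        rfl
    _ = ∫ p in Ioo 0 η₀ ×ˢ univ, (p.2 ^ 2 + p.1 ^ 2) • g (pcoordSwap p) :=
        (setIntegral_prod _ hint).symm
    _ = ∫ y, g y := by
        rw [← setIntegral_image_pcoordSwap hs hs',
          setIntegral_eq_integral_of_ae_compl_eq_zero hcover]

/-- For f supported inside the parabola 𝒫_{η₀},
∫₀^∞ (ℛf)(x(ξ,η₀), r) K₀(kr) dr
= ∫₀^{η₀} ∫_{−∞}^∞ f*(ξ',η') K₀(k ρ(ξ,η₀,ξ',η')) dξ' dη'. -/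
theorem sphMean_K0_parabolic (η₀ : ℝ) (hη₀ : 0 < η₀) (f : ℝ × ℝ → ℝ)
    (hf : Continuous f) (hsupp : HasCompactSupport f)
    (hvan : ∀ ξ η : ℝ, η₀ ≤ η → f (pcoord ξ η) = 0)
    (k : ℝ) (hk : 0 < k) (ξ : ℝ) :
    ∫ r in Set.Ioi (0:ℝ), sphMean f (pcoord ξ η₀) r * K0 (k*r) =
      ∫ η' in (0:ℝ)..η₀, ∫ ξ' : ℝ,
        (ξ'^2 + η'^2) * f (pcoord ξ' η') *
          K0 (k * edist2 (pcoord ξ η₀) (pcoord ξ' η')) := by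
  have hpolar := integrableOn_polarCoord_target_mul_K0 hf hsupp hk (pcoord ξ η₀)
  rw [integral_sphMean_mul hpolar]
  simp_rw [mul_assoc]
  refine (intervalIntegral_integral_mul_comp_pcoord hη₀.le
    (integrable_mul_comp_edist2 (φ := fun r => K0 (k * r)) hpolar) fun ξ' η' hη' => ?_).symm
  rw [hvan ξ' η' hη', zero_mul]
end
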